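/- arXiv:1501.03323 — 2 statements merged into one kernel-verified Lean document; each statement's English description precedes it below -/
import Mathlib

section
/- (Optimality of the truncated Karhunen–Loève expansion.) Let (φ_k)_{k≥1} be a Hilbert (orthonormal) basis of H of eigenvectors of the covariance operator T with nonincreasing eigenvalues λ_1 ≥ λ_2 ≥ … ≥ 0, T φ_k = λ_k φ_k. Then for every K ∈ ℕ and every orthonormal family ψ_1, …, ψ_K in H, E‖X − Σ_{k=1}^K ⟨X, ψ_k⟩ ψ_k‖² ≥ E‖X − Σ_{k=1}^K ⟨X, φ_k⟩ φ_k‖² = Σ_{k=K+1}^∞ λ_k; i.e., among all K-term expansions onto orthonormal families, the one built on the K dominant eigenvectors of T minimizes the mean-square error. -/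
open MeasureTheory ProbabilityTheory RealInnerProductSpace

lemma kl_proj_sq {H : Type*} [NormedAddCommGroup H] [InnerProductSpace ℝ H]
    {ι : Type*} {v : ι → H} (hv : Orthonormal ℝ v) (s : Finset ι) (x : H) :
    ‖x - ∑ i ∈ s, ⟪x, v i⟫ • v i‖ ^ 2 = ‖x‖ ^ 2 - ∑ i ∈ s, ⟪x, v i⟫ ^ 2 := by
  rw [norm_sub_sq_real, inner_sum]
  have h1 : ∀ i ∈ s, ⟪x, ⟪x, v i⟫ • v i⟫ = ⟪x, v i⟫ ^ 2 := by
    intro i _; rw [real_inner_smul_right]; ring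
  rw [Finset.sum_congr rfl h1]
  have h2 : ‖∑ i ∈ s, ⟪x, v i⟫ • v i‖ ^ 2 = ∑ i ∈ s, ⟪x, v i⟫ ^ 2 := by
    rw [← real_inner_self_eq_norm_sq, hv.inner_sum]
    exact Finset.sum_congr rfl fun i _ => by simp [sq, starRingEnd_apply]
  rw [h2]; ring

lemma kl_meas {H : Type*} [NormedAddCommGroup H] [InnerProductSpace ℝ H]
    {Ω : Type*} [MeasureSpace Ω] {X : Ω → H} (hXmeas : AEStronglyMeasurable X ℙ) (u : H) :
    AEStronglyMeasurable (fun ω => ⟪X ω, u⟫) ℙ :=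
  hXmeas.inner aestronglyMeasurable_const

lemma kl_int {H : Type*} [NormedAddCommGroup H] [InnerProductSpace ℝ H]
    {Ω : Type*} [MeasureSpace Ω] {X : Ω → H} (hXmeas : AEStronglyMeasurable X ℙ)
    (hX2 : Integrable (fun ω => ‖X ω‖ ^ 2) ℙ) (u : H) :
    Integrable (fun ω => ⟪X ω, u⟫ ^ 2) ℙ := by
  refine ((hX2.const_mul (‖u‖ ^ 2)).mono' ((kl_meas hXmeas u).pow 2) ?_)
  filter_upwards with ω
  have h1 := abs_real_inner_le_norm (X ω) u
  rw [Real.norm_eq_abs, abs_pow]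
  calc |⟪X ω, u⟫| ^ 2 ≤ (‖X ω‖ * ‖u‖) ^ 2 := by
        apply pow_le_pow_left₀ (abs_nonneg _) h1
    _ = ‖u‖ ^ 2 * ‖X ω‖ ^ 2 := by ring

lemma kl_trace {H : Type*} [NormedAddCommGroup H] [InnerProductSpace ℝ H] [CompleteSpace H]
    {Ω : Type*} [MeasureSpace Ω] [IsProbabilityMeasure (ℙ : Measure Ω)]
    {X : Ω → H} (hXmeas : AEStronglyMeasurable X ℙ)
    (hX2 : Integrable (fun ω => ‖X ω‖ ^ 2) ℙ)
    (φ : HilbertBasis ℕ ℝ H) (lam : ℕ → ℝ) (hlam : ∀ k, 0 ≤ lam k)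
    (hEk : ∀ k, ∫ ω, ⟪X ω, φ k⟫ ^ 2 ∂ℙ = lam k) :
    Summable lam ∧ ∫ ω, ‖X ω‖ ^ 2 ∂ℙ = ∑' k, lam k := by
  have hpar : ∀ x : H, HasSum (fun k => ⟪x, φ k⟫ ^ 2) (‖x‖ ^ 2) := by
    intro x
    have := φ.hasSum_inner_mul_inner x x
    simpa [real_inner_self_eq_norm_sq, real_inner_comm x, sq] using this
  have hnn : ∀ k ω, (0:ℝ) ≤ ⟪X ω, φ k⟫ ^ 2 := fun k ω => sq_nonneg _
  have key : ∫⁻ ω, ENNReal.ofReal (‖X ω‖ ^ 2) ∂ℙ = ∑' k, ENNReal.ofReal (lam k) := by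
    have h1 : ∀ ω, ENNReal.ofReal (‖X ω‖ ^ 2)
        = ∑' k, ENNReal.ofReal (⟪X ω, φ k⟫ ^ 2) := by
      intro ω
      rw [← (hpar (X ω)).tsum_eq]
      exact ENNReal.ofReal_tsum_of_nonneg (hnn · ω) (hpar (X ω)).summable
    simp_rw [h1]
    rw [lintegral_tsum (f := fun k ω => ENNReal.ofReal (⟪X ω, φ k⟫ ^ 2)) (fun k => (ENNReal.measurable_ofReal.comp_aemeasurable
      ((kl_meas hXmeas (φ k)).aemeasurable.pow_const 2)))]
    congr 1; ext k
    rw [← ofReal_integral_eq_lintegral_ofReal (kl_int hXmeas hX2 (φ k))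
      (Filter.Eventually.of_forall (hnn k)), hEk k]
  have hIX : ENNReal.ofReal (∫ ω, ‖X ω‖ ^ 2 ∂ℙ) = ∑' k, ENNReal.ofReal (lam k) := by
    rw [ofReal_integral_eq_lintegral_ofReal hX2
      (Filter.Eventually.of_forall fun ω => sq_nonneg _), key]
  have hne : ∑' k, ENNReal.ofReal (lam k) ≠ ⊤ := by
    rw [← hIX]; exact ENNReal.ofReal_ne_top
  constructor
  · have := ENNReal.summable_toReal hne
    simpa [ENNReal.toReal_ofReal (hlam _)] using this
  · have := congrArg ENNReal.toReal hIX
    rw [ENNReal.toReal_ofReal (integral_nonneg fun ω => sq_nonneg _),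
      ENNReal.tsum_toReal_eq (fun k => ENNReal.ofReal_ne_top)] at this
    simpa [ENNReal.toReal_ofReal (hlam _)] using this

lemma kl_kyfan {H : Type*} [NormedAddCommGroup H] [InnerProductSpace ℝ H] [CompleteSpace H]
    (T : H →L[ℝ] H) (hsymm : ∀ u v : H, ⟪T u, v⟫ = ⟪T v, u⟫)
    (φ : HilbertBasis ℕ ℝ H)
    (lam : ℕ → ℝ) (hmono : Antitone lam) (hlam : ∀ k, 0 ≤ lam k) (hsum : Summable lam)
    (hTφ : ∀ k, T (φ k) = lam k • φ k)
    (K : ℕ) (ψ : Fin K → H) (hψ : Orthonormal ℝ ψ) :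
    ∑ j : Fin K, ⟪T (ψ j), ψ j⟫ ≤ ∑ k ∈ Finset.range K, lam k := by
  set a : Fin K → ℕ → ℝ := fun j i => ⟪ψ j, φ i⟫ ^ 2 with ha
  have haj : ∀ j, HasSum (a j) 1 := by
    intro j
    have h0 := φ.hasSum_inner_mul_inner (ψ j) (ψ j)
    have h1 : ⟪ψ j, ψ j⟫ = 1 := by
      rw [real_inner_self_eq_norm_sq, hψ.1 j, one_pow]
    rw [h1] at h0
    have h2 : (fun i => ⟪ψ j, φ i⟫ * ⟪φ i, ψ j⟫) = a j := by
      ext i; simp only [ha]; rw [sq, real_inner_comm (φ i) (ψ j)]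
    rwa [h2] at h0
  have hann : ∀ j i, 0 ≤ a j i := fun j i => sq_nonneg _
  have ha1 : ∀ j i, a j i ≤ 1 := by
    intro j i
    have h := abs_real_inner_le_norm (ψ j) (φ i)
    rw [hψ.1 j, φ.orthonormal.1 i, one_mul] at h
    calc a j i = |⟪ψ j, φ i⟫| ^ 2 := by rw [sq_abs]
      _ ≤ 1 ^ 2 := pow_le_pow_left₀ (abs_nonneg _) h 2
      _ = 1 := one_pow 2
  set c : ℕ → ℝ := fun i => ∑ j : Fin K, a j i with hc
  have hcK : HasSum c (K : ℝ) := by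
    have := hasSum_sum (s := (Finset.univ : Finset (Fin K)))
      (f := fun j => a j) (a := fun _ => (1:ℝ)) (fun j _ => haj j)
    simpa using this
  have hcnn : ∀ i, 0 ≤ c i := fun i => Finset.sum_nonneg fun j _ => hann j i
  have hc1 : ∀ i, c i ≤ 1 := by
    intro i
    have h := hψ.sum_inner_products_le (s := Finset.univ) (φ i)
    rw [φ.orthonormal.1 i, one_pow] at h
    refine le_trans (le_of_eq ?_) h
    refine Finset.sum_congr rfl fun j _ => ?_
    rw [ha]; simp [Real.norm_eq_abs, sq_abs, real_inner_comm]
  have hsla : ∀ j, Summable (fun i => lam i * a j i) := by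
    intro j
    refine Summable.of_nonneg_of_le (fun i => mul_nonneg (hlam i) (hann j i))
      (fun i => ?_) hsum
    calc lam i * a j i ≤ lam i * 1 := mul_le_mul_of_nonneg_left (ha1 j i) (hlam i)
      _ = lam i := mul_one _
  have hslc : Summable (fun i => lam i * c i) := by
    refine Summable.of_nonneg_of_le (fun i => mul_nonneg (hlam i) (hcnn i))
      (fun i => ?_) hsum
    calc lam i * c i ≤ lam i * 1 := mul_le_mul_of_nonneg_left (hc1 i) (hlam i)
      _ = lam i := mul_one _
  have hTψ : ∀ j, ⟪T (ψ j), ψ j⟫ = ∑' i, lam i * a j i := by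
    intro j
    rw [← φ.tsum_inner_mul_inner (T (ψ j)) (ψ j)]
    congr 1; ext i
    rw [hsymm (ψ j) (φ i), hTφ i, real_inner_smul_left, ha]
    have : ⟪φ i, ψ j⟫ = ⟪ψ j, φ i⟫ := real_inner_comm _ _
    rw [this]; ring
  have hstep : ∑ j : Fin K, ⟪T (ψ j), ψ j⟫ = ∑' i, lam i * c i := by
    simp_rw [hTψ]
    rw [← Summable.tsum_finsetSum (fun j _ => hsla j)]
    congr 1; ext i; rw [hc, Finset.mul_sum]
  rw [hstep]
  -- main inequality
  have hgsum : Summable (fun i => if i < K then lam i - lam K else 0) := by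
    apply summable_of_ne_finset_zero (s := Finset.range K)
    intro i hi
    rw [if_neg (by simpa using hi)]
  have hdiff : Summable (fun i => (lam i - lam K) * c i) := by
    have h2 : Summable (fun i => lam K * c i) := hcK.summable.mul_left _
    simpa [sub_mul] using hslc.sub h2
  have hle : ∀ i, (lam i - lam K) * c i ≤ (if i < K then lam i - lam K else 0) := by
    intro i
    by_cases h : i < K
    · rw [if_pos h]
      calc (lam i - lam K) * c i ≤ (lam i - lam K) * 1 :=
            mul_le_mul_of_nonneg_left (hc1 i) (by linarith [hmono h.le])
        _ = lam i - lam K := mul_one _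
    · rw [if_neg h]
      exact mul_nonpos_of_nonpos_of_nonneg (by linarith [hmono (not_lt.mp h)]) (hcnn i)
  have hmain : ∑' i, (lam i - lam K) * c i ≤ ∑ i ∈ Finset.range K, (lam i - lam K) := by
    calc ∑' i, (lam i - lam K) * c i
        ≤ ∑' i, (if i < K then lam i - lam K else 0) := Summable.tsum_le_tsum hle hdiff hgsum
      _ = ∑ i ∈ Finset.range K, (if i < K then lam i - lam K else 0) :=
          tsum_eq_sum (fun i hi => by rw [if_neg (by simpa using hi)])
      _ = ∑ i ∈ Finset.range K, (lam i - lam K) := Finset.sum_congr rfl (fun i hi =>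
            if_pos (Finset.mem_range.mp hi))
  have hsplit : ∑' i, lam i * c i
      = (∑' i, (lam i - lam K) * c i) + lam K * (K : ℝ) := by
    rw [← hcK.tsum_eq, ← tsum_mul_left]
    rw [← Summable.tsum_add hdiff (hcK.summable.mul_left _)]
    congr 1; ext i; ring
  rw [hsplit]
  have heq : ∑ k ∈ Finset.range K, lam k
      = (∑ i ∈ Finset.range K, (lam i - lam K)) + lam K * (K : ℝ) := by
    rw [Finset.sum_sub_distrib]
    simp [Finset.sum_const, Finset.card_range]; ring
  rw [heq]
  linarith [hmain]

lemma kl_err {H : Type*} [NormedAddCommGroup H] [InnerProductSpace ℝ H]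
    {Ω : Type*} [MeasureSpace Ω] {X : Ω → H} (hXmeas : AEStronglyMeasurable X ℙ)
    (hX2 : Integrable (fun ω => ‖X ω‖ ^ 2) ℙ)
    {ι : Type*} {v : ι → H} (hv : Orthonormal ℝ v) (s : Finset ι) :
    ∫ ω, ‖X ω - ∑ i ∈ s, ⟪X ω, v i⟫ • v i‖ ^ 2 ∂ℙ
      = ∫ ω, ‖X ω‖ ^ 2 ∂ℙ - ∑ i ∈ s, ∫ ω, ⟪X ω, v i⟫ ^ 2 ∂ℙ := by
  have h1 : ∀ ω, ‖X ω - ∑ i ∈ s, ⟪X ω, v i⟫ • v i‖ ^ 2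
      = ‖X ω‖ ^ 2 - ∑ i ∈ s, ⟪X ω, v i⟫ ^ 2 := fun ω => kl_proj_sq hv s (X ω)
  simp_rw [h1]
  rw [integral_sub hX2 (integrable_finset_sum s fun i _ => kl_int hXmeas hX2 (v i)),
    integral_finset_sum s fun i _ => kl_int hXmeas hX2 (v i)]

/-- Optimality of the truncated Karhunen–Loève expansion: among all `K`-term expansions onto
orthonormal families, the one built on the `K` dominant eigenvectors of the covariance
operator minimizes the mean-square error, and this minimal error equals the tail sum of the
eigenvalues. -/
theorem kl_truncation_optimality
    {H : Type*} [NormedAddCommGroup H] [InnerProductSpace ℝ H] [CompleteSpace H]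
    {Ω : Type*} [MeasureSpace Ω] [IsProbabilityMeasure (ℙ : Measure Ω)]
    (X : Ω → H) (hXmeas : AEStronglyMeasurable X ℙ)
    (hX2 : Integrable (fun ω => ‖X ω‖ ^ 2) ℙ)
    (hXmean : ∀ u : H, ∫ ω, ⟪X ω, u⟫ ∂ℙ = 0)
    (T : H →L[ℝ] H)
    (hT : ∀ u v : H, ⟪T u, v⟫ = ∫ ω, ⟪X ω, u⟫ * ⟪X ω, v⟫ ∂ℙ)
    (φ : HilbertBasis ℕ ℝ H)
    (lam : ℕ → ℝ) (hmono : Antitone lam) (hlam : ∀ k, 0 ≤ lam k)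
    (hTφ : ∀ k, T (φ k) = lam k • φ k)
    (K : ℕ) (ψ : Fin K → H) (hψ : Orthonormal ℝ ψ) :
    (∫ ω, ‖X ω - ∑ k : Fin K, ⟪X ω, ψ k⟫ • ψ k‖ ^ 2 ∂ℙ ≥
        ∫ ω, ‖X ω - ∑ k ∈ Finset.range K, ⟪X ω, φ k⟫ • φ k‖ ^ 2 ∂ℙ) ∧
      ∫ ω, ‖X ω - ∑ k ∈ Finset.range K, ⟪X ω, φ k⟫ • φ k‖ ^ 2 ∂ℙ =
        ∑' k : ℕ, if k < K then 0 else lam k := by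
  have hsymm : ∀ u v : H, ⟪T u, v⟫ = ⟪T v, u⟫ := by
    intro u v
    rw [hT u v, hT v u]
    congr 1; ext ω; ring
  have hEuu : ∀ u : H, ∫ ω, ⟪X ω, u⟫ ^ 2 ∂ℙ = ⟪T u, u⟫ := by
    intro u
    rw [hT u u]
    congr 1; ext ω; ring
  have hEk : ∀ k, ∫ ω, ⟪X ω, φ k⟫ ^ 2 ∂ℙ = lam k := by
    intro k
    rw [hEuu (φ k), hTφ k, real_inner_smul_left, real_inner_self_eq_norm_sq,
      φ.orthonormal.1 k, one_pow, mul_one]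
  obtain ⟨hsum, htr⟩ := kl_trace hXmeas hX2 φ lam hlam hEk
  have hIφ : ∫ ω, ‖X ω - ∑ k ∈ Finset.range K, ⟪X ω, φ k⟫ • φ k‖ ^ 2 ∂ℙ
      = ∫ ω, ‖X ω‖ ^ 2 ∂ℙ - ∑ k ∈ Finset.range K, lam k := by
    rw [kl_err hXmeas hX2 φ.orthonormal (Finset.range K)]
    congr 1
    exact Finset.sum_congr rfl fun k _ => hEk k
  have hIψ : ∫ ω, ‖X ω - ∑ k : Fin K, ⟪X ω, ψ k⟫ • ψ k‖ ^ 2 ∂ℙ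
      = ∫ ω, ‖X ω‖ ^ 2 ∂ℙ - ∑ j : Fin K, ⟪T (ψ j), ψ j⟫ := by
    rw [kl_err hXmeas hX2 hψ Finset.univ]
    congr 1
    exact Finset.sum_congr rfl fun j _ => hEuu (ψ j)
  constructor
  · rw [hIψ, hIφ]
    have := kl_kyfan T hsymm φ lam hmono hlam hsum hTφ K ψ hψ
    linarith
  · rw [hIφ, htr]
    have hsf : Summable (fun k => if k < K then (0:ℝ) else lam k) := by
      refine Summable.of_nonneg_of_le (fun k => ?_) (fun k => ?_) hsum
      · split <;> simp [hlam]
      · split <;> simp [hlam, le_refl]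
    have hsh : Summable (fun k => if k < K then lam k else (0:ℝ)) := by
      apply summable_of_ne_finset_zero (s := Finset.range K)
      intro k hk
      rw [if_neg (by simpa using hk)]
    have hdecomp : ∑' k, lam k
        = (∑' k, if k < K then (0:ℝ) else lam k)
          + ∑' k, (if k < K then lam k else (0:ℝ)) := by
      rw [← Summable.tsum_add hsf hsh]
      congr 1; ext k; split <;> simp
    have hh : ∑' k, (if k < K then lam k else (0:ℝ)) = ∑ k ∈ Finset.range K, lam k := by
      rw [tsum_eq_sum (s := Finset.range K) (fun k hk => by rw [if_neg (by simpa using hk)])]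
      exact Finset.sum_congr rfl fun k hk => if_pos (Finset.mem_range.mp hk)
    rw [hdecomp, hh]
    ring
end

section
/- (Positive semi-definiteness of the squared-exponential covariance kernel.) For every l > 0, every n ∈ ℕ, every choice of points x_1, …, x_n ∈ ℝ and every choice of real coefficients c_1, …, c_n, one has Σ_{i=1}^n Σ_{j=1}^n c_i c_j exp(−(x_i − x_j)²/(2 l²)) ≥ 0. -/
lemma real_exp_eq_tsum (x : ℝ) : Real.exp x = ∑' n : ℕ, x ^ n / (n.factorial : ℝ) := by
  rw [Real.exp_eq_exp_ℝ, NormedSpace.exp_eq_tsum_div]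

/-- Positive semi-definiteness of the squared-exponential covariance kernel: for every
length-scale `l > 0`, points `x_1, …, x_n ∈ ℝ` and coefficients `c_1, …, c_n ∈ ℝ`,
`Σ_i Σ_j c_i c_j exp(−(x_i − x_j)²/(2 l²)) ≥ 0`. -/
theorem squared_exponential_kernel_posSemidef
    (l : ℝ) (hl : 0 < l) (n : ℕ) (x : Fin n → ℝ) (c : Fin n → ℝ) :
    0 ≤ ∑ i, ∑ j, c i * c j * Real.exp (-(x i - x j) ^ 2 / (2 * l ^ 2)) := by
  have hl0 : (l : ℝ) ≠ 0 := hl.ne'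
  set a : Fin n → ℝ := fun i => c i * Real.exp (-(x i) ^ 2 / (2 * l ^ 2)) with ha
  have key : ∀ i j : Fin n, c i * c j * Real.exp (-(x i - x j) ^ 2 / (2 * l ^ 2))
      = a i * a j * Real.exp (x i * x j / l ^ 2) := by
    intro i j
    simp only [ha]
    have h : -(x i - x j) ^ 2 / (2 * l ^ 2)
        = -(x i) ^ 2 / (2 * l ^ 2) + -(x j) ^ 2 / (2 * l ^ 2) + x i * x j / l ^ 2 := by
      field_simp
      ring
    rw [h, Real.exp_add, Real.exp_add]
    ring
  simp only [key]
  have hexp : ∀ i j : Fin n, a i * a j * Real.exp (x i * x j / l ^ 2)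
      = ∑' k : ℕ, a i * a j * ((x i * x j / l ^ 2) ^ k / (k.factorial : ℝ)) := by
    intro i j
    rw [real_exp_eq_tsum, tsum_mul_left]
  simp only [hexp]
  have hsummable : ∀ i j : Fin n,
      Summable (fun k : ℕ => a i * a j * ((x i * x j / l ^ 2) ^ k / (k.factorial : ℝ))) :=
    fun i j => (Real.summable_pow_div_factorial _).mul_left _
  have hswap : (∑ i, ∑ j, ∑' k : ℕ, a i * a j * ((x i * x j / l ^ 2) ^ k / (k.factorial : ℝ)))
      = ∑' k : ℕ, ∑ i, ∑ j, a i * a j * ((x i * x j / l ^ 2) ^ k / (k.factorial : ℝ)) := by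
    have h1 : ∀ i : Fin n, (∑ j, ∑' k : ℕ, a i * a j * ((x i * x j / l ^ 2) ^ k / (k.factorial : ℝ)))
        = ∑' k : ℕ, ∑ j, a i * a j * ((x i * x j / l ^ 2) ^ k / (k.factorial : ℝ)) :=
      fun i => (Summable.tsum_finsetSum (fun j _ => hsummable i j)).symm
    simp only [h1]
    exact (Summable.tsum_finsetSum (fun i _ => summable_sum (fun j _ => hsummable i j))).symm
  rw [hswap]
  refine tsum_nonneg fun k => ?_
  have hterm : ∀ i j : Fin n, a i * a j * ((x i * x j / l ^ 2) ^ k / (k.factorial : ℝ))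
      = (a i * (x i / l) ^ k) * ((a j * (x j / l) ^ k) * (((k.factorial : ℝ) : ℝ))⁻¹) := by
    intro i j
    rw [show x i * x j / l ^ 2 = (x i / l) * (x j / l) by rw [div_mul_div_comm, ← pow_two], mul_pow]
    ring
  simp only [hterm, ← Finset.sum_mul, ← Finset.mul_sum]
  have : (∑ i, a i * (x i / l) ^ k) * ((∑ j, a j * (x j / l) ^ k) * (((k.factorial : ℝ) : ℝ))⁻¹)
      = (∑ i, a i * (x i / l) ^ k) ^ 2 * (((k.factorial : ℝ) : ℝ))⁻¹ := by ring
  rw [this]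
  positivity
end
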